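/- arXiv:2112.03756 — 2 statements merged into one kernel-verified Lean document; each statement's English description precedes it below -/
import Mathlib

section
/- Theorem 1 (LipNet-MRAC stability bound). Let x_a : ℕ → ℝ^n, x_m : ℕ → ℝ^m, and u : ℕ → ℝ be ℓ² signals, let γ > 0 and β ≥ 0 be constants, and let T : ℝ^n × ℝ^m × ℝ → ℝ be an L-Lipschitz function (with respect to the Euclidean norm on the concatenated input) satisfying T(0,0,0) = 0. Define the input adjustment δu_k = T(x_{a,k}, x_{m,k}, u_k) for all k. Assume the robot-system gain bound ‖x_a‖_{ℓ²} ≤ γ‖u + δu‖_{ℓ²} + β holds, and that L < 1/γ. Then the state signal satisfies ‖x_a‖_{ℓ²} ≤ (γ(1+L)‖u‖_{ℓ²} + γL‖x_m‖_{ℓ²} + β) / (1 − γL). -/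
/-!
Bound the adjustment pointwise: since `T(0,0,0) = 0`, `|δu_k| ≤ L (‖x_{a,k}‖ + ‖x_{m,k}‖ + |u_k|)`,
so by Minkowski `‖δu‖ ≤ L (‖x_a‖ + ‖x_m‖ + ‖u‖)`. Feeding this and `‖u + δu‖ ≤ ‖u‖ + ‖δu‖` into the
gain bound gives `(1 - γL) ‖x_a‖ ≤ γ(1+L)‖u‖ + γL‖x_m‖ + β`, and `1 - γL > 0` is the small-gain
condition `L < 1/γ`.
-/

/-- The ℓ² signal norm of a discrete-time signal: `‖x‖_{ℓ²} = (∑_{k=0}^∞ ‖x_k‖²)^{1/2}`. -/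
noncomputable def l2Norm {E : Type*} [NormedAddCommGroup E] (x : ℕ → E) : ℝ :=
  Real.sqrt (∑' k, ‖x k‖ ^ 2)

section l2Norm

variable {E : Type*} [NormedAddCommGroup E]

lemma memℓp_two_iff_summable_sq {f : ℕ → E} :
    Memℓp f 2 ↔ Summable fun k => ‖f k‖ ^ 2 := by
  rw [memℓp_gen_iff (by norm_num)]
  norm_num

lemma l2Norm_eq_norm_lp {f : ℕ → E} (hf : Memℓp f 2) :
    l2Norm f = ‖(⟨f, hf⟩ : lp (fun _ : ℕ => E) 2)‖ := by
  rw [lp.norm_eq_tsum_rpow (by norm_num), l2Norm, Real.sqrt_eq_rpow]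
  norm_num

lemma l2Norm_add_le {f g : ℕ → E} (hf : Memℓp f 2) (hg : Memℓp g 2) :
    l2Norm (f + g) ≤ l2Norm f + l2Norm g := by
  rw [l2Norm_eq_norm_lp hf, l2Norm_eq_norm_lp hg, l2Norm_eq_norm_lp (hf.add hg)]
  exact norm_add_le (⟨f, hf⟩ : lp (fun _ : ℕ => E) 2) ⟨g, hg⟩

lemma l2Norm_mono {F : Type*} [NormedAddCommGroup F] {f : ℕ → E} {g : ℕ → F}
    (hg : Memℓp g 2) (hfg : ∀ k, ‖f k‖ ≤ ‖g k‖) : l2Norm f ≤ l2Norm g := by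
  have hsq : ∀ k, ‖f k‖ ^ 2 ≤ ‖g k‖ ^ 2 := fun k => by gcongr; exact hfg k
  have hg' := memℓp_two_iff_summable_sq.mp hg
  exact Real.sqrt_le_sqrt <|
    (hg'.of_nonneg_of_le (fun _ => by positivity) hsq).tsum_le_tsum hsq hg'

lemma l2Norm_smul {𝕜 : Type*} [NormedField 𝕜] [NormedSpace 𝕜 E] (c : 𝕜) (f : ℕ → E) :
    l2Norm (c • f) = ‖c‖ * l2Norm f := by
  simp only [l2Norm, Pi.smul_apply, norm_smul, mul_pow, tsum_mul_left]
  rw [Real.sqrt_mul (by positivity), Real.sqrt_sq (norm_nonneg c)]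

@[simp]
lemma l2Norm_norm (f : ℕ → E) : l2Norm (fun k => ‖f k‖) = l2Norm f := by
  simp [l2Norm]

variable {F G H : Type*} [NormedAddCommGroup F] [NormedAddCommGroup G] [NormedAddCommGroup H]
  {f : ℕ → E} {g : ℕ → F} {h : ℕ → G} {w : ℕ → H} {L : ℝ}

lemma memℓp_two_of_norm_le_mul_add (hg : Memℓp g 2) (hh : Memℓp h 2) (hw : Memℓp w 2)
    (hf : ∀ k, ‖f k‖ ≤ L * (‖g k‖ + ‖h k‖ + ‖w k‖)) : Memℓp f 2 :=
  (((hg.norm.add hh.norm).add hw.norm).const_smul L).mono hf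

lemma l2Norm_le_of_norm_le_mul_add (hg : Memℓp g 2) (hh : Memℓp h 2) (hw : Memℓp w 2)
    (hL : 0 ≤ L) (hf : ∀ k, ‖f k‖ ≤ L * (‖g k‖ + ‖h k‖ + ‖w k‖)) :
    l2Norm f ≤ L * (l2Norm g + l2Norm h + l2Norm w) := calc
  l2Norm f ≤ l2Norm (L • ((‖g ·‖) + (‖h ·‖) + (‖w ·‖))) :=
    l2Norm_mono (((hg.norm.add hh.norm).add hw.norm).const_smul L)
      fun k => (hf k).trans (Real.le_norm_self _)
  _ = L * l2Norm ((‖g ·‖) + (‖h ·‖) + (‖w ·‖)) := by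
    rw [l2Norm_smul, Real.norm_of_nonneg hL]
  _ ≤ L * (l2Norm (‖g ·‖) + l2Norm (‖h ·‖) + l2Norm (‖w ·‖)) := by
    gcongr
    refine (l2Norm_add_le (hg.norm.add hh.norm) hw.norm).trans ?_
    gcongr
    exact l2Norm_add_le hg.norm hh.norm
  _ = L * (l2Norm g + l2Norm h + l2Norm w) := by simp only [l2Norm_norm]

end l2Norm

lemma sqrt_sq_add_sq_add_sq_le {a b c : ℝ} (ha : 0 ≤ a) (hb : 0 ≤ b) (hc : 0 ≤ c) :
    Real.sqrt (a ^ 2 + b ^ 2 + c ^ 2) ≤ a + b + c := by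
  refine Real.sqrt_le_iff.mpr ⟨by positivity, ?_⟩
  nlinarith [mul_nonneg ha hb, mul_nonneg hb hc, mul_nonneg ha hc]

theorem lipnet_mrac_stability_bound_general {n m : ℕ}
    (xa : ℕ → EuclideanSpace ℝ (Fin n)) (xm : ℕ → EuclideanSpace ℝ (Fin m)) (u : ℕ → ℝ)
    (hxa : Summable fun k => ‖xa k‖ ^ 2)
    (hxm : Summable fun k => ‖xm k‖ ^ 2)
    (hu : Summable fun k => ‖u k‖ ^ 2)
    (γ β L : ℝ) (hγ : 0 < γ) (hL0 : 0 ≤ L)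
    (T : EuclideanSpace ℝ (Fin n) → EuclideanSpace ℝ (Fin m) → ℝ → ℝ)
    (hT : ∀ (x x' : EuclideanSpace ℝ (Fin n)) (y y' : EuclideanSpace ℝ (Fin m)) (v v' : ℝ),
      |T x y v - T x' y' v'| ≤ L * Real.sqrt (‖x - x'‖ ^ 2 + ‖y - y'‖ ^ 2 + |v - v'| ^ 2))
    (hT0 : T 0 0 0 = 0)
    (δu : ℕ → ℝ) (hδu : ∀ k, δu k = T (xa k) (xm k) (u k))
    (hgain : l2Norm xa ≤ γ * l2Norm (fun k => u k + δu k) + β)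
    (hLγ : L < 1 / γ) :
    l2Norm xa ≤ (γ * (1 + L) * l2Norm u + γ * L * l2Norm xm + β) / (1 - γ * L) := by
  rw [← memℓp_two_iff_summable_sq] at hxa hxm hu
  have hδ_le : ∀ k, ‖δu k‖ ≤ L * (‖xa k‖ + ‖xm k‖ + ‖u k‖) := fun k => by
    simpa [hδu, hT0] using (hT (xa k) 0 (xm k) 0 (u k) 0).trans <|
      mul_le_mul_of_nonneg_left (sqrt_sq_add_sq_add_sq_le (norm_nonneg _) (norm_nonneg _)
        (abs_nonneg _)) hL0
  have hδ : l2Norm δu ≤ L * (l2Norm xa + l2Norm xm + l2Norm u) :=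
    l2Norm_le_of_norm_le_mul_add hxa hxm hu hL0 hδ_le
  have htri : l2Norm (fun k => u k + δu k) ≤ l2Norm u + l2Norm δu :=
    l2Norm_add_le hu (memℓp_two_of_norm_le_mul_add hxa hxm hu hδ_le)
  have hγL : 0 < 1 - γ * L := by
    rw [lt_div_iff₀ hγ] at hLγ
    linarith
  rw [le_div_iff₀ hγL]
  linarith [mul_le_mul_of_nonneg_left htri hγ.le, mul_le_mul_of_nonneg_left hδ hγ.le]

/-- **Theorem 1 (LipNet-MRAC stability bound).**
If the robot state satisfies the gain bound `‖x_a‖ ≤ γ‖u + δu‖ + β`, where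
`δu_k = T(x_{a,k}, x_{m,k}, u_k)` is computed by an `L`-Lipschitz network `T`
(Lipschitz w.r.t. the Euclidean norm on the concatenated input) with `T(0,0,0) = 0`,
and `L < 1/γ`, then `‖x_a‖ ≤ (γ(1+L)‖u‖ + γL‖x_m‖ + β)/(1 − γL)`. -/
theorem lipnet_mrac_stability_bound {n m : ℕ}
    (xa : ℕ → EuclideanSpace ℝ (Fin n)) (xm : ℕ → EuclideanSpace ℝ (Fin m)) (u : ℕ → ℝ)
    (hxa : Summable fun k => ‖xa k‖ ^ 2)
    (hxm : Summable fun k => ‖xm k‖ ^ 2)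
    (hu : Summable fun k => ‖u k‖ ^ 2)
    (γ β L : ℝ) (hγ : 0 < γ) (hβ : 0 ≤ β) (hL0 : 0 ≤ L)
    (T : EuclideanSpace ℝ (Fin n) → EuclideanSpace ℝ (Fin m) → ℝ → ℝ)
    (hT : ∀ (x x' : EuclideanSpace ℝ (Fin n)) (y y' : EuclideanSpace ℝ (Fin m)) (v v' : ℝ),
      |T x y v - T x' y' v'| ≤ L * Real.sqrt (‖x - x'‖ ^ 2 + ‖y - y'‖ ^ 2 + |v - v'| ^ 2))
    (hT0 : T 0 0 0 = 0)
    (δu : ℕ → ℝ) (hδu : ∀ k, δu k = T (xa k) (xm k) (u k))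
    (hgain : l2Norm xa ≤ γ * l2Norm (fun k => u k + δu k) + β)
    (hLγ : L < 1 / γ) :
    l2Norm xa ≤ (γ * (1 + L) * l2Norm u + γ * L * l2Norm xm + β) / (1 - γ * L) :=
  lipnet_mrac_stability_bound_general xa xm u hxa hxm hu γ β L hγ hL0 T hT hT0 δu hδu hgain hLγ
end

section
/- The GroupSort activation is 1-Lipschitz: fix g, m ∈ ℕ and regard ℝ^{g·m} as the space of g groups of m coordinates each, with the Euclidean norm on all g·m coordinates. Let GroupSort : ℝ^{g·m} → ℝ^{g·m} be the map that, within each of the g groups, rearranges the m entries in nonincreasing order. Then for all x, y, ‖GroupSort(x) − GroupSort(y)‖ ≤ ‖x − y‖. -/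
lemma groupSort_key {m : ℕ} (a b : Fin m → ℝ)
    (ha : ∀ j j' : Fin m, j ≤ j' → a j' ≤ a j)
    (hb : ∀ j j' : Fin m, j ≤ j' → b j' ≤ b j)
    (π : Equiv.Perm (Fin m)) :
    ∑ j, (a j - b j) ^ 2 ≤ ∑ j, (a j - b (π j)) ^ 2 := by
  have hmono : Monovary a b := by
    intro i j hij
    rcases le_total i j with h | h
    · exact absurd (hb i j h) (not_le.2 hij)
    · exact ha j i h
  have hrea : ∑ j, a j * b (π j) ≤ ∑ j, a j * b j := by
    have := hmono.sum_smul_comp_perm_le_sum_smul (σ := π)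
    simpa [smul_eq_mul] using this
  have h2 : ∑ j, (b (π j)) ^ 2 = ∑ j, (b j) ^ 2 :=
    Equiv.sum_comp π (fun j => (b j) ^ 2)
  have expand : ∀ c d : ℝ, (c - d) ^ 2 = c ^ 2 + d ^ 2 - 2 * (c * d) := by
    intro c d; ring
  simp only [expand, Finset.sum_sub_distrib, Finset.sum_add_distrib, ← Finset.mul_sum, h2]
  linarith

/-- **The GroupSort activation is 1-Lipschitz.**
Regard `ℝ^{g·m}` as `g` groups of `m` coordinates each (indexed by `Fin g × Fin m`), with the
Euclidean norm on all `g·m` coordinates. Let `GS` be the map that, within each of the `g`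
groups, rearranges the `m` entries in nonincreasing order: for every input `x` and every
group `i` there is a permutation `σ` of the `m` positions (possibly depending on `x` and `i`)
with `(GS x) (i, j) = x (i, σ j)`, and `j ↦ (GS x) (i, j)` is nonincreasing. Then
`‖GS x − GS y‖ ≤ ‖x − y‖`. -/
theorem groupSort_lipschitz {g m : ℕ}
    (GS : EuclideanSpace ℝ (Fin g × Fin m) → EuclideanSpace ℝ (Fin g × Fin m))
    (hperm : ∀ (x : EuclideanSpace ℝ (Fin g × Fin m)) (i : Fin g),
      ∃ σ : Equiv.Perm (Fin m), ∀ j, GS x (i, j) = x (i, σ j))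
    (hmono : ∀ (x : EuclideanSpace ℝ (Fin g × Fin m)) (i : Fin g) (j j' : Fin m),
      j ≤ j' → GS x (i, j') ≤ GS x (i, j))
    (x y : EuclideanSpace ℝ (Fin g × Fin m)) :
    ‖GS x - GS y‖ ≤ ‖x - y‖ := by
  rw [EuclideanSpace.norm_eq, EuclideanSpace.norm_eq]
  apply Real.sqrt_le_sqrt
  simp only [PiLp.sub_apply, Real.norm_eq_abs, sq_abs]
  rw [Fintype.sum_prod_type, Fintype.sum_prod_type]
  apply Finset.sum_le_sum
  intro i _
  obtain ⟨σ, hσ⟩ := hperm x i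
  obtain ⟨τ, hτ⟩ := hperm y i
  have hy : ∀ k, y (i, k) = GS y (i, τ⁻¹ k) := by
    intro k; rw [hτ]; simp
  calc ∑ j, (GS x (i, j) - GS y (i, j)) ^ 2
      ≤ ∑ j, (GS x (i, j) - GS y (i, (σ.trans τ.symm) j)) ^ 2 :=
        groupSort_key _ _ (hmono x i) (hmono y i) (σ.trans τ.symm)
    _ = ∑ j, (x (i, σ j) - y (i, σ j)) ^ 2 := by
        refine Finset.sum_congr rfl fun j _ => ?_
        rw [hσ, hy (σ j)]
        rfl
    _ = ∑ j, (x (i, j) - y (i, j)) ^ 2 :=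
        Equiv.sum_comp σ (fun j => (x (i, j) - y (i, j)) ^ 2)
end
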